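/- arXiv:1606.08533 — 7 statements merged into one kernel-verified Lean document; each statement's English description precedes it below -/
import Mathlib

section
/- Let r ≥ 0 and let x_a < x_b. If v is continuously differentiable on [x_a, x_b] and is regarded as the weak function (v restricted to (x_a,x_b), v(x_a), v(x_b)), then its discrete weak derivative d_{w,r}v equals the L²(x_a,x_b)-orthogonal projection of v′ onto the space of polynomials of degree at most r; in particular ∫_{x_a}^{x_b} (d_{w,r}v − v′)·q dx = 0 for every polynomial q of degree at most r. -/
open MeasureTheory Set

noncomputable section

/-- `p` is the discrete weak derivative of order `r` of the weak function
`(v0, vl, vr)` on the interval `(c, d)`: it is a polynomial of degree at most `r`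
satisfying `∫ p q = -∫ v0 q' + vr q(d) - vl q(c)` for all polynomials `q` of
degree at most `r`. -/
def IsWeakDeriv (r : ℕ) (c d : ℝ) (v0 : ℝ → ℝ) (vl vr : ℝ) (p : Polynomial ℝ) : Prop :=
  p.degree ≤ (r : WithBot ℕ) ∧ ∀ q : Polynomial ℝ, q.degree ≤ (r : WithBot ℕ) →
    (∫ t in c..d, p.eval t * q.eval t) =
      -(∫ t in c..d, v0 t * q.derivative.eval t) + vr * q.eval d - vl * q.eval c

/-- `p` is the L²(c,d)-orthogonal projection of `g` onto polynomials of degree at most `l`. -/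
def IsL2Proj (l : ℕ) (c d : ℝ) (g : ℝ → ℝ) (p : Polynomial ℝ) : Prop :=
  p.degree ≤ (l : WithBot ℕ) ∧ ∀ q : Polynomial ℝ, q.degree ≤ (l : WithBot ℕ) →
    (∫ t in c..d, (g t - p.eval t) * q.eval t) = 0

/-- The right-hand side is the one defining the discrete weak derivative of the weak function
`(v, v a, v b)`. -/
theorem integral_deriv_mul_polynomial_eval {a b : ℝ} (hab : a ≤ b) {v v' : ℝ → ℝ}
    (hv : ∀ t ∈ Icc a b, HasDerivWithinAt v (v' t) (Icc a b) t)
    (hv' : IntervalIntegrable v' volume a b) (q : Polynomial ℝ) :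
    ∫ t in a..b, v' t * q.eval t =
      -(∫ t in a..b, v t * q.derivative.eval t) + v b * q.eval b - v a * q.eval a := by
  rw [← uIcc_of_le hab] at hv
  have hq' : IntervalIntegrable (fun t => q.derivative.eval t) volume a b :=
    q.derivative.continuous.intervalIntegrable a b
  rw [intervalIntegral.integral_mul_deriv_eq_deriv_mul_of_hasDerivWithinAt hv
    (fun t _ => (q.hasDerivAt t).hasDerivWithinAt) hv' hq']
  ring

theorem IsL2Proj.of_integral_mul_eq {l : ℕ} {c d : ℝ} {g : ℝ → ℝ} {p : Polynomial ℝ}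
    (hg : IntervalIntegrable g volume c d) (hp : p.degree ≤ (l : WithBot ℕ))
    (h : ∀ q : Polynomial ℝ, q.degree ≤ (l : WithBot ℕ) →
      ∫ t in c..d, g t * q.eval t = ∫ t in c..d, p.eval t * q.eval t) :
    IsL2Proj l c d g p := by
  refine ⟨hp, fun q hq => ?_⟩
  have hgq : IntervalIntegrable (fun t => g t * q.eval t) volume c d :=
    hg.mul_continuousOn q.continuous.continuousOn
  have hpq : IntervalIntegrable (fun t => p.eval t * q.eval t) volume c d :=
    (p.continuous.mul q.continuous).intervalIntegrable c d
  simp_rw [sub_mul]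
  rw [intervalIntegral.integral_sub hgq hpq, h q hq, sub_self]

/-- If `v` is continuously differentiable on `[x_a, x_b]` (with derivative
`v'`) and is regarded as the weak function `(v, v(x_a), v(x_b))`, then its discrete weak
derivative of order `r` is the L²-orthogonal projection of `v'` onto polynomials of degree
at most `r`; in particular `∫ (d_{w,r}v - v') q = 0` for every such `q`. -/
theorem discrete_weak_derivative_of_smooth (r : ℕ) (xa xb : ℝ) (hab : xa < xb)
    (v v' : ℝ → ℝ)
    (hv : ∀ t ∈ Set.Icc xa xb, HasDerivWithinAt v (v' t) (Set.Icc xa xb) t)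
    (hv' : ContinuousOn v' (Set.Icc xa xb))
    (p : Polynomial ℝ) (hp : IsWeakDeriv r xa xb v (v xa) (v xb) p) :
    IsL2Proj r xa xb v' p := by
  have hv'_int : IntervalIntegrable v' volume xa xb := hv'.intervalIntegrable_of_Icc hab.le
  refine IsL2Proj.of_integral_mul_eq hv'_int hp.1 fun q hq => ?_
  rw [hp.2 q hq, integral_deriv_mul_polynomial_eval hab.le hv hv'_int]
end
end

section
/- Let k ≥ 0 and r > k be integers, let x_a < x_b, and let v = (v^0, v^a, v^b) be a weak function on [x_a, x_b] whose interior component v^0 is a polynomial of degree at most k. Then the discrete weak derivative d_{w,r}v is identically zero if and only if v is constant on [x_a, x_b], i.e., v^0 is the constant polynomial with value v^a and v^a = v^b. -/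
open MeasureTheory Set

noncomputable section

/-!
Integrating by parts, testing `d_{w,r} v` against `q` gives `∫ v⁰' q` plus the boundary jumps
`(v^b - v⁰(x_b)) q(x_b) - (v^a - v⁰(x_a)) q(x_a)`. If `d_{w,r} v = 0`, the test function
`q = -(x - x_a)(x - x_b) v⁰'`, of degree at most `k + 1 ≤ r`, kills the boundary terms and leaves
`∫ (x - x_a)(x_b - x) (v⁰')² = 0`, so `v⁰` is constant; linear test functions then make both jumps
vanish. Conversely, for constant `v` the weak derivative is `L²`-orthogonal to itself.
-/

open Polynomial

namespace Polynomial

lemma intervalIntegral_eval_mul_eval_derivative (a b : ℝ) (u q : ℝ[X]) :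
    ∫ t in a..b, u.eval t * q.derivative.eval t =
      u.eval b * q.eval b - u.eval a * q.eval a - ∫ t in a..b, u.derivative.eval t * q.eval t :=
  intervalIntegral.integral_mul_deriv_eq_deriv_mul (fun x _ => u.hasDerivAt x)
    (fun x _ => q.hasDerivAt x) (u.derivative.continuous.intervalIntegrable a b)
    (q.derivative.continuous.intervalIntegrable a b)

lemma intervalIntegral_pos_of_nonneg {a b : ℝ} (hab : a < b) {P : ℝ[X]} (hP : P ≠ 0)
    (hnonneg : ∀ x ∈ Ioc a b, 0 ≤ P.eval x) : 0 < ∫ x in a..b, P.eval x := by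
  obtain ⟨c, hc, hPc⟩ : ∃ c ∈ Ioc a b, P.eval c ≠ 0 := by
    by_contra! hroots
    exact hP (eq_zero_of_infinite_isRoot P ((Ioc_infinite hab).mono hroots))
  simpa using intervalIntegral.integral_lt_integral_of_continuousOn_of_le_of_exists_lt hab
    continuousOn_const P.continuous.continuousOn hnonneg
    ⟨c, Ioc_subset_Icc_self hc, (hnonneg c hc).lt_of_ne' hPc⟩

lemma eq_zero_of_intervalIntegral_mul_sq_eq_zero {a b : ℝ} (hab : a < b) {w f : ℝ[X]}
    (hw : w ≠ 0) (hw_nonneg : ∀ x ∈ Ioc a b, 0 ≤ w.eval x)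
    (h : ∫ x in a..b, w.eval x * f.eval x ^ 2 = 0) : f = 0 := by
  by_contra hf
  have hpos := intervalIntegral_pos_of_nonneg hab (P := w * f ^ 2)
    (mul_ne_zero hw (pow_ne_zero 2 hf))
    (fun x hx => by simpa using mul_nonneg (hw_nonneg x hx) (sq_nonneg (f.eval x)))
  simp only [eval_mul, eval_pow] at hpos
  exact hpos.ne' h

end Polynomial

namespace IsWeakDeriv

variable {r : ℕ} {a b vl vr : ℝ} {v p : ℝ[X]}

theorem intervalIntegral_mul_eq (hp : IsWeakDeriv r a b (fun t => v.eval t) vl vr p) {q : ℝ[X]}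
    (hq : q.degree ≤ r) :
    ∫ t in a..b, p.eval t * q.eval t =
      (∫ t in a..b, v.derivative.eval t * q.eval t)
        + (vr - v.eval b) * q.eval b - (vl - v.eval a) * q.eval a := by
  rw [hp.2 q hq, intervalIntegral_eval_mul_eval_derivative]
  ring

theorem eq_zero_of_const {c : ℝ} (hab : a < b)
    (hp : IsWeakDeriv r a b (fun t => (C c).eval t) c c p) : p = 0 := by
  refine eq_zero_of_intervalIntegral_mul_sq_eq_zero hab one_ne_zero (by simp) ?_
  simpa [sq] using hp.intervalIntegral_mul_eq hp.1

theorem derivative_eq_zero (hab : a < b) (hv : v.natDegree < r)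
    (hp : IsWeakDeriv r a b (fun t => v.eval t) vl vr 0) : v.derivative = 0 := by
  by_contra hv'
  set B : ℝ[X] := -((X - C a) * (X - C b))
  have hB : B ≠ 0 := neg_ne_zero.2 (mul_ne_zero (X_sub_C_ne_zero a) (X_sub_C_ne_zero b))
  have hB_nonneg : ∀ x ∈ Ioc a b, 0 ≤ B.eval x := fun x hx => by
    simp only [B, eval_neg, eval_mul, eval_sub, eval_X, eval_C]
    nlinarith [hx.1, hx.2]
  have hdeg : (B * v.derivative).degree ≤ r := by
    have hB2 : B.natDegree = 2 := by
      rw [natDegree_neg, natDegree_mul (X_sub_C_ne_zero a) (X_sub_C_ne_zero b),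
        natDegree_X_sub_C, natDegree_X_sub_C]
    have := natDegree_derivative_lt (derivative_ne_zero.1 hv')
    refine degree_le_of_natDegree_le ?_
    rw [natDegree_mul hB hv', hB2]
    omega
  refine hv' (eq_zero_of_intervalIntegral_mul_sq_eq_zero hab hB hB_nonneg ?_)
  simpa [B, sq, mul_left_comm] using (hp.intervalIntegral_mul_eq hdeg).symm

theorem eq_C_of_eq_zero (hab : a < b) (hv : v.natDegree < r)
    (hp : IsWeakDeriv r a b (fun t => v.eval t) vl vr 0) : v = C vl ∧ vl = vr := by
  have hv' := hp.derivative_eq_zero hab hv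
  obtain ⟨c, hvc⟩ : ∃ c, v = C c := ⟨_, eq_C_of_derivative_eq_zero hv'⟩
  have boundary : ∀ y, 0 = (vr - c) * (b - y) - (vl - c) * (a - y) := fun y => by
    have hq : (X - C y).degree ≤ (r : WithBot ℕ) := by
      rw [degree_X_sub_C]
      exact_mod_cast Nat.one_le_iff_ne_zero.2 (by omega)
    have := hp.intervalIntegral_mul_eq hq
    rw [hv', hvc] at this
    simpa using this
  have hr : vr = c := by
    have h := boundary a
    rw [sub_self, mul_zero, sub_zero, eq_comm, mul_eq_zero, sub_eq_zero, sub_eq_zero] at h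
    exact h.resolve_right hab.ne'
  have hl : vl = c := by
    have h := boundary b
    rw [sub_self, mul_zero, zero_sub, eq_comm, neg_eq_zero, mul_eq_zero, sub_eq_zero,
      sub_eq_zero] at h
    exact h.resolve_right hab.ne
  exact ⟨hl ▸ hvc, hl.trans hr.symm⟩

end IsWeakDeriv

/-- Lemma 3.1. Let `k ≥ 0`, `r > k`, `x_a < x_b`, and let
`v = (v⁰, v_a, v_b)` be a weak function whose interior component `v⁰` is a polynomial of
degree at most `k`. Then the discrete weak derivative `d_{w,r} v` vanishes identically
if and only if `v` is constant on `[x_a, x_b]`, i.e. `v⁰` is the constant polynomial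
with value `v_a` and `v_a = v_b`. -/
theorem discrete_weak_derivative_eq_zero_iff_const (k r : ℕ) (hkr : k < r)
    (xa xb : ℝ) (hab : xa < xb)
    (v0 : Polynomial ℝ) (hdeg : v0.degree ≤ (k : WithBot ℕ)) (va vb : ℝ)
    (p : Polynomial ℝ) (hp : IsWeakDeriv r xa xb (fun t => v0.eval t) va vb p) :
    p = 0 ↔ v0 = Polynomial.C va ∧ va = vb := by
  have hv0 : v0.natDegree < r := (natDegree_le_iff_degree_le.2 hdeg).trans_lt hkr
  constructor
  · rintro rfl
    exact hp.eq_C_of_eq_zero hab hv0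
  · rintro ⟨rfl, rfl⟩
    exact hp.eq_zero_of_const hab
end
end

section
/- Let k ≥ 0 and r > k. For every partition a = x_1 < x_2 < … < x_N = b and every v ∈ S_h, the nodal values of v satisfy |v^i| ≤ (x_i − a)^{1/2} ‖d_{w,r}v‖_h for each i = 1, …, N, where d_{w,r}v denotes the piecewise discrete weak derivative of v and ‖·‖_h the broken L² norm. -/
open MeasureTheory Set

noncomputable section

/-- `x 0 = a < x 1 < ⋯ < x (N-1) = b` is a partition of `(a,b)`. -/
def IsPartition (N : ℕ) (a b : ℝ) (x : ℕ → ℝ) : Prop :=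
  2 ≤ N ∧ x 0 = a ∧ x (N - 1) = b ∧ ∀ i < N - 1, x i < x (i + 1)

/-- Membership in the weak finite element space `S_h`: on each of the `N - 1` elements the
interior component is a polynomial of degree at most `k`, the nodal values are single
valued, and the nodal value at the left endpoint vanishes. -/
def MemSh (k N : ℕ) (v0 : ℕ → Polynomial ℝ) (vn : ℕ → ℝ) : Prop :=
  (∀ i < N - 1, (v0 i).degree ≤ (k : WithBot ℕ)) ∧ vn 0 = 0

/-- `D i` is the discrete weak derivative of order `r` of the weak finite element function
`(v0, vn)` on the `i`-th element `(x i, x (i+1))`. -/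
def IsWeakDerivFam (r N : ℕ) (x : ℕ → ℝ) (v0 : ℕ → Polynomial ℝ) (vn : ℕ → ℝ)
    (D : ℕ → Polynomial ℝ) : Prop :=
  ∀ i < N - 1, IsWeakDeriv r (x i) (x (i + 1)) (fun t => (v0 i).eval t) (vn i) (vn (i + 1)) (D i)

/-- `(u0, un)` with discrete weak derivatives `Du` is a weak finite element solution:
it belongs to `S_h` and satisfies
`(a2 d_w u_h, d_w v)_h + (a0 u_h⁰, v⁰) = (f, v⁰)` for all `v ∈ S_h`. -/
def IsWFESol (k r N : ℕ) (x : ℕ → ℝ) (a2 a0 f : ℝ → ℝ)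
    (u0 : ℕ → Polynomial ℝ) (un : ℕ → ℝ) (Du : ℕ → Polynomial ℝ) : Prop :=
  MemSh k N u0 un ∧ IsWeakDerivFam r N x u0 un Du ∧
  ∀ (v0 : ℕ → Polynomial ℝ) (vn : ℕ → ℝ) (Dv : ℕ → Polynomial ℝ),
    MemSh k N v0 vn → IsWeakDerivFam r N x v0 vn Dv →
    ((∑ i ∈ Finset.range (N - 1), ∫ t in x i..x (i + 1), a2 t * (Du i).eval t * (Dv i).eval t)
      + ∑ i ∈ Finset.range (N - 1), ∫ t in x i..x (i + 1), a0 t * (u0 i).eval t * (v0 i).eval t)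
      = ∑ i ∈ Finset.range (N - 1), ∫ t in x i..x (i + 1), f t * (v0 i).eval t

/-! Testing the weak derivative against `q = 1` shows `∫_{I_j} d_w v = v^{j+1} - v^j`, so `v^i`
telescopes from `v^1 = 0` into a sum of element integrals of `d_w v`. Cauchy–Schwarz on each
element bounds the square of each increment by `h_j ‖d_w v‖²_{I_j}`, and Cauchy–Schwarz over the
sum turns `∑_{j<i} h_j` into `x_i - a`. -/

theorem sq_intervalIntegral_le_mul {f : ℝ → ℝ} {c d : ℝ} (hcd : c ≤ d)
    (hf : IntervalIntegrable f volume c d)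
    (hf2 : IntervalIntegrable (fun t => f t ^ 2) volume c d) :
    (∫ t in c..d, f t) ^ 2 ≤ (d - c) * ∫ t in c..d, f t ^ 2 := by
  -- `s ↦ ∫ (f - s)²` is a nonnegative quadratic, so its discriminant is nonpositive.
  have hquad : ∀ s : ℝ,
      0 ≤ (d - c) * (s * s) + (-2 * ∫ t in c..d, f t) * s + ∫ t in c..d, f t ^ 2 := by
    intro s
    have hexpand : ∫ t in c..d, (f t - s) ^ 2 =
        (d - c) * (s * s) + (-2 * ∫ t in c..d, f t) * s + ∫ t in c..d, f t ^ 2 := by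
      have hlin : IntervalIntegrable (fun t => 2 * f t * s) volume c d :=
        (hf.const_mul 2).mul_const s
      simp_rw [sub_sq]
      rw [intervalIntegral.integral_add (hf2.sub hlin) intervalIntegrable_const,
        intervalIntegral.integral_sub hf2 hlin,
        intervalIntegral.integral_mul_const, intervalIntegral.integral_const_mul,
        intervalIntegral.integral_const, smul_eq_mul]
      ring
    rw [← hexpand]
    exact intervalIntegral.integral_nonneg hcd fun t _ => sq_nonneg _
  have := discrim_le_zero hquad
  rw [discrim] at this
  linarith

namespace IsWeakDeriv

variable {r : ℕ} {c d : ℝ} {v0 : ℝ → ℝ} {vl vr : ℝ} {p : Polynomial ℝ}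

theorem integral_eval_eq_sub (hp : IsWeakDeriv r c d v0 vl vr p) :
    ∫ t in c..d, p.eval t = vr - vl := by
  simpa using hp.2 1 (by simp)

theorem sq_sub_le_mul_integral_sq (hp : IsWeakDeriv r c d v0 vl vr p) (hcd : c ≤ d) :
    (vr - vl) ^ 2 ≤ (d - c) * ∫ t in c..d, p.eval t ^ 2 := by
  rw [← hp.integral_eval_eq_sub]
  exact sq_intervalIntegral_le_mul hcd (p.continuous.intervalIntegrable c d)
    ((p.continuous.pow 2).intervalIntegrable c d)

end IsWeakDeriv

theorem sq_sub_le_sum_mul_sum {R : Type*} [CommRing R] [LinearOrder R] [IsStrictOrderedRing R]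
    {u h e : ℕ → R} (n : ℕ) (hh : ∀ j < n, 0 ≤ h j) (he : ∀ j < n, 0 ≤ e j)
    (hstep : ∀ j < n, (u (j + 1) - u j) ^ 2 ≤ h j * e j) :
    (u n - u 0) ^ 2 ≤ (∑ j ∈ Finset.range n, h j) * ∑ j ∈ Finset.range n, e j := by
  rw [← Finset.sum_range_sub]
  exact Finset.sum_sq_le_sum_mul_sum_of_sq_le_mul _
    (fun j hj => hh j (Finset.mem_range.mp hj)) (fun j hj => he j (Finset.mem_range.mp hj))
    (fun j hj => hstep j (Finset.mem_range.mp hj))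

theorem nodal_weak_embedding_general (k r : ℕ) (a b : ℝ)
    (N : ℕ) (x : ℕ → ℝ) (hpart : IsPartition N a b x)
    (v0 : ℕ → Polynomial ℝ) (vn : ℕ → ℝ) (D : ℕ → Polynomial ℝ)
    (hv : MemSh k N v0 vn) (hD : IsWeakDerivFam r N x v0 vn D) :
    ∀ i < N, |vn i| ≤ Real.sqrt (x i - a) *
      Real.sqrt (∑ j ∈ Finset.range (N - 1), ∫ t in x j..x (j + 1), ((D j).eval t) ^ 2) := by
  obtain ⟨-, hx0, -, hmono⟩ := hpart
  intro i hi
  have hle : ∀ j < i, j < N - 1 := fun j hj => by omega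
  have hstep : ∀ j < i, 0 ≤ x (j + 1) - x j := fun j hj => sub_nonneg.mpr (hmono j (hle j hj)).le
  have henergy : ∀ j < N - 1, 0 ≤ ∫ t in x j..x (j + 1), ((D j).eval t) ^ 2 := fun j hj =>
    intervalIntegral.integral_nonneg (hmono j hj).le fun t _ => sq_nonneg _
  have hxa : 0 ≤ x i - a := by
    rw [← hx0, ← Finset.sum_range_sub x]
    exact Finset.sum_nonneg fun j hj => hstep j (Finset.mem_range.mp hj)
  have hsq := sq_sub_le_sum_mul_sum (u := vn) i hstep (fun j hj => henergy j (hle j hj))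
    (fun j hj => (hD j (hle j hj)).sq_sub_le_mul_integral_sq (hmono j (hle j hj)).le)
  rw [hv.2, sub_zero, Finset.sum_range_sub x, hx0] at hsq
  have hpartial : ∑ j ∈ Finset.range i, ∫ t in x j..x (j + 1), ((D j).eval t) ^ 2 ≤
      ∑ j ∈ Finset.range (N - 1), ∫ t in x j..x (j + 1), ((D j).eval t) ^ 2 :=
    Finset.sum_le_sum_of_subset_of_nonneg (Finset.range_subset_range.mpr (by omega))
      fun j hj _ => henergy j (Finset.mem_range.mp hj)
  rw [← Real.sqrt_mul hxa]
  exact Real.abs_le_sqrt (hsq.trans (mul_le_mul_of_nonneg_left hpartial hxa))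

/-- Lemma 3.2, nodal weak embedding inequality. Let `k ≥ 0` and `r > k`.
For every partition `a = x 0 < ⋯ < x (N-1) = b` and every `v ∈ S_h` with piecewise
discrete weak derivative `D`, the nodal values satisfy
`|vⁱ| ≤ (x_i - a)^{1/2} ‖d_{w,r} v‖_h` for each node. -/
theorem nodal_weak_embedding (k r : ℕ) (hkr : k < r) (a b : ℝ) (hab : a < b)
    (N : ℕ) (x : ℕ → ℝ) (hpart : IsPartition N a b x)
    (v0 : ℕ → Polynomial ℝ) (vn : ℕ → ℝ) (D : ℕ → Polynomial ℝ)
    (hv : MemSh k N v0 vn) (hD : IsWeakDerivFam r N x v0 vn D) :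
    ∀ i < N, |vn i| ≤ Real.sqrt (x i - a) *
      Real.sqrt (∑ j ∈ Finset.range (N - 1), ∫ t in x j..x (j + 1), ((D j).eval t) ^ 2) :=
  nodal_weak_embedding_general k r a b N x hpart v0 vn D hv hD
end
end

section
/- Let k ≥ 0 and r > k. For every partition a = x_1 < x_2 < … < x_N = b and every v ∈ S_h, the interior component v^0 (the piecewise polynomial equal to v^0_i on I_i) satisfies the weak embedding inequality ‖v^0‖_{L²(a,b)} ≤ ((b − a) + h) ‖d_{w,r}v‖_h. -/
open MeasureTheory Set

noncomputable section

/-!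
On the element `(c, d)`, test the weak derivative `p` against the antiderivative `q` of `v⁰`
with `q c = 0`; it is admissible because `deg q ≤ k + 1 ≤ r`, and it gives
`‖v⁰‖² = v(d) q(d) - (p, q)`, while `|q| ≤ √(d - c) ‖v⁰‖` pointwise. Testing against `1` shows
that the nodal values are partial sums of `∫ p`, so `|vⁱ| ≤ √(b - a) ‖d_w v‖_h`. Summing the
element estimates with Cauchy–Schwarz gives `‖v⁰‖² ≤ (h + (b - a)) ‖d_w v‖_h ‖v⁰‖`.
-/

open Polynomial

section CauchySchwarz

variable {c d : ℝ} {f g : ℝ → ℝ}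

lemma abs_le_sqrt_mul_sqrt_of_sq_le {a u w : ℝ} (h : a ^ 2 ≤ u * w) (hu : 0 ≤ u) :
    |a| ≤ √u * √w := by
  rw [← Real.sqrt_sq_eq_abs, ← Real.sqrt_mul hu]
  exact Real.sqrt_le_sqrt h

lemma sq_intervalIntegral_mul_le (hcd : c ≤ d) (hf : Continuous f) (hg : Continuous g) :
    (∫ t in c..d, f t * g t) ^ 2 ≤ (∫ t in c..d, f t ^ 2) * ∫ t in c..d, g t ^ 2 := by
  have hquad : ∀ s : ℝ, 0 ≤ (∫ t in c..d, g t ^ 2) * (s * s)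
      + (2 * ∫ t in c..d, f t * g t) * s + ∫ t in c..d, f t ^ 2 := by
    intro s
    have hexpand : (∫ t in c..d, (f t + s * g t) ^ 2) = (∫ t in c..d, f t ^ 2)
        + (2 * s) * (∫ t in c..d, f t * g t) + (s * s) * ∫ t in c..d, g t ^ 2 := by
      simp_rw [← intervalIntegral.integral_const_mul]
      rw [← intervalIntegral.integral_add, ← intervalIntegral.integral_add]
      · exact intervalIntegral.integral_congr fun t _ => by ring
      all_goals exact Continuous.intervalIntegrable (by fun_prop) c d
    have := hexpand ▸ intervalIntegral.integral_nonneg hcd fun t _ => sq_nonneg (f t + s * g t)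
    linarith
  have := discrim_le_zero hquad
  rw [discrim] at this
  linarith

lemma abs_intervalIntegral_mul_le (hcd : c ≤ d) (hf : Continuous f) (hg : Continuous g) :
    |∫ t in c..d, f t * g t| ≤ √(∫ t in c..d, f t ^ 2) * √(∫ t in c..d, g t ^ 2) :=
  abs_le_sqrt_mul_sqrt_of_sq_le (sq_intervalIntegral_mul_le hcd hf hg)
    (intervalIntegral.integral_nonneg hcd fun t _ => sq_nonneg (f t))

lemma sq_intervalIntegral_le (hcd : c ≤ d) (hf : Continuous f) :
    (∫ t in c..d, f t) ^ 2 ≤ (d - c) * ∫ t in c..d, f t ^ 2 := by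
  simpa [mul_comm] using sq_intervalIntegral_mul_le hcd hf continuous_const (g := fun _ => 1)

lemma abs_intervalIntegral_le (hcd : c ≤ d) (hf : Continuous f) :
    |∫ t in c..d, f t| ≤ √(d - c) * √(∫ t in c..d, f t ^ 2) :=
  abs_le_sqrt_mul_sqrt_of_sq_le (sq_intervalIntegral_le hcd hf) (sub_nonneg.2 hcd)

end CauchySchwarz

lemma sum_sqrt_mul_sqrt_le_of_nonneg {ι : Type*} (s : Finset ι) {f g : ι → ℝ}
    (hf : ∀ i ∈ s, 0 ≤ f i) (hg : ∀ i ∈ s, 0 ≤ g i) :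
    ∑ i ∈ s, √(f i) * √(g i) ≤ √(∑ i ∈ s, f i) * √(∑ i ∈ s, g i) := by
  have := Real.sum_mul_le_sqrt_mul_sqrt s (fun i => √(f i)) (fun i => √(g i))
  rwa [Finset.sum_congr rfl fun i hi => Real.sq_sqrt (hf i hi),
    Finset.sum_congr rfl fun i hi => Real.sq_sqrt (hg i hi)] at this

namespace Polynomial

variable {K : Type*} [Field K]

def antideriv (p : K[X]) : K[X] := p.sum fun n a => C (a / (n + 1)) * X ^ (n + 1)

lemma derivative_antideriv [CharZero K] (p : K[X]) : derivative (antideriv p) = p := by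
  conv_rhs => rw [← p.sum_C_mul_X_pow_eq]
  simp only [antideriv, Polynomial.sum, map_sum, derivative_C_mul_X_pow, Nat.add_sub_cancel]
  refine Finset.sum_congr rfl fun n _ => ?_
  rw [Nat.cast_add_one, div_mul_cancel₀ _ (Nat.cast_add_one_ne_zero n)]

lemma degree_antideriv_le (p : K[X]) : (antideriv p).degree ≤ p.degree + 1 := by
  refine (degree_sum_le _ _).trans (Finset.sup_le fun n hn => ?_)
  refine (degree_C_mul_X_pow_le _ _).trans ?_
  exact_mod_cast add_le_add_left (le_degree_of_ne_zero (mem_support_iff.mp hn)) 1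

end Polynomial

lemma sq_eval_le_of_derivative_eq {q P : ℝ[X]} {c d t : ℝ} (hq : derivative q = P)
    (hqc : q.eval c = 0) (ht : t ∈ Icc c d) :
    q.eval t ^ 2 ≤ (d - c) * ∫ s in c..d, P.eval s ^ 2 := by
  have hftc : q.eval t = ∫ s in c..t, P.eval s := by
    rw [← hq, intervalIntegral.integral_eq_sub_of_hasDerivAt (fun s _ => q.hasDerivAt s)
      (q.derivative.continuous.intervalIntegrable c t), hqc, sub_zero]
  calc q.eval t ^ 2 ≤ (t - c) * ∫ s in c..t, P.eval s ^ 2 :=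
        hftc ▸ sq_intervalIntegral_le ht.1 P.continuous
    _ ≤ (d - c) * ∫ s in c..d, P.eval s ^ 2 := by
        refine mul_le_mul (by linarith [ht.2]) ?_
          (intervalIntegral.integral_nonneg ht.1 fun s _ => sq_nonneg _) (by linarith [ht.1, ht.2])
        exact intervalIntegral.integral_mono_interval le_rfl ht.1 ht.2
          (Filter.Eventually.of_forall fun s => sq_nonneg _)
          ((P.continuous.pow 2).intervalIntegrable c d)

namespace IsWeakDeriv

variable {r : ℕ} {c d vl vr : ℝ} {v0 : ℝ → ℝ} {p : ℝ[X]}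

lemma integral_eq_sub (hw : IsWeakDeriv r c d v0 vl vr p) :
    ∫ t in c..d, p.eval t = vr - vl := by
  have := hw.2 1 (degree_one.trans_le (WithBot.coe_le_coe.2 r.zero_le))
  simpa using this

lemma integral_sq_le {k : ℕ} (hkr : k < r) (hcd : c ≤ d) {P : ℝ[X]}
    (hP : P.degree ≤ k) (hw : IsWeakDeriv r c d P.eval vl vr p) :
    ∫ t in c..d, P.eval t ^ 2 ≤
      (d - c) * (√(∫ t in c..d, p.eval t ^ 2) * √(∫ t in c..d, P.eval t ^ 2))
        + |vr| * (√(d - c) * √(∫ t in c..d, P.eval t ^ 2)) := by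
  set S := ∫ t in c..d, P.eval t ^ 2
  set q := antideriv P - C ((antideriv P).eval c)
  have hq : derivative q = P := by simp [q, derivative_antideriv]
  have hqc : q.eval c = 0 := by simp [q]
  have hqdeg : q.degree ≤ r := by
    refine (degree_sub_le _ _).trans (max_le ((degree_antideriv_le P).trans ?_)
      (degree_C_le.trans (WithBot.coe_le_coe.2 r.zero_le)))
    calc P.degree + 1 ≤ (k : WithBot ℕ) + 1 := by gcongr
      _ = ((k + 1 : ℕ) : WithBot ℕ) := rfl
      _ ≤ r := by exact_mod_cast hkr
  have hS : S = vr * q.eval d - ∫ t in c..d, p.eval t * q.eval t := by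
    have := hw.2 q hqdeg
    simp only [hq, hqc, mul_zero, sub_zero, ← sq] at this
    linarith
  have hqd : |q.eval d| ≤ √(d - c) * √S :=
    abs_le_sqrt_mul_sqrt_of_sq_le (sq_eval_le_of_derivative_eq hq hqc ⟨hcd, le_rfl⟩)
      (sub_nonneg.2 hcd)
  have hqL2 : √(∫ t in c..d, q.eval t ^ 2) ≤ (d - c) * √S := by
    have : ∫ t in c..d, q.eval t ^ 2 ≤ (d - c) ^ 2 * S := by
      calc ∫ t in c..d, q.eval t ^ 2 ≤ ∫ _ in c..d, (d - c) * S :=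
            intervalIntegral.integral_mono_on hcd ((q.continuous.pow 2).intervalIntegrable c d)
              intervalIntegrable_const fun t ht => sq_eval_le_of_derivative_eq hq hqc ht
        _ = (d - c) ^ 2 * S := by simp; ring
    calc √(∫ t in c..d, q.eval t ^ 2) ≤ √((d - c) ^ 2 * S) := Real.sqrt_le_sqrt this
      _ = (d - c) * √S := by rw [Real.sqrt_mul (sq_nonneg _), Real.sqrt_sq (sub_nonneg.2 hcd)]
  have hpq : |∫ t in c..d, p.eval t * q.eval t| ≤ √(∫ t in c..d, p.eval t ^ 2) * ((d - c) * √S) :=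
    (abs_intervalIntegral_mul_le hcd p.continuous q.continuous).trans (by gcongr)
  calc S ≤ |vr| * |q.eval d| + |∫ t in c..d, p.eval t * q.eval t| := by
        rw [← abs_mul]
        linarith [le_abs_self (vr * q.eval d), neg_abs_le (∫ t in c..d, p.eval t * q.eval t)]
    _ ≤ |vr| * (√(d - c) * √S) + √(∫ t in c..d, p.eval t ^ 2) * ((d - c) * √S) := by gcongr
    _ = _ := by ring

end IsWeakDeriv

lemma sqrt_sum_le_of_le_sqrt_mul {ι : Type*} (s : Finset ι) {S T H : ι → ℝ} {h V : ℝ}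
    (hh : 0 ≤ h) (hV : 0 ≤ V) (hS : ∀ i ∈ s, 0 ≤ S i) (hT : ∀ i ∈ s, 0 ≤ T i)
    (hH : ∀ i ∈ s, 0 ≤ H i)
    (hle : ∀ i ∈ s, S i ≤ h * (√(T i) * √(S i)) + V * (√(H i) * √(S i))) :
    √(∑ i ∈ s, S i) ≤ h * √(∑ i ∈ s, T i) + V * √(∑ i ∈ s, H i) := by
  set A := h * √(∑ i ∈ s, T i) + V * √(∑ i ∈ s, H i)
  have hsum : ∑ i ∈ s, S i ≤ A * √(∑ i ∈ s, S i) :=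
    calc ∑ i ∈ s, S i ≤ ∑ i ∈ s, (h * (√(T i) * √(S i)) + V * (√(H i) * √(S i))) :=
          Finset.sum_le_sum hle
      _ = h * ∑ i ∈ s, √(T i) * √(S i) + V * ∑ i ∈ s, √(H i) * √(S i) := by
          rw [Finset.sum_add_distrib, Finset.mul_sum, Finset.mul_sum]
      _ ≤ h * (√(∑ i ∈ s, T i) * √(∑ i ∈ s, S i)) + V * (√(∑ i ∈ s, H i) * √(∑ i ∈ s, S i)) := by
          gcongr
          · exact sum_sqrt_mul_sqrt_le_of_nonneg s hT hS
          · exact sum_sqrt_mul_sqrt_le_of_nonneg s hH hS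
      _ = A * √(∑ i ∈ s, S i) := by ring
  have hA : 0 ≤ A := by positivity
  nlinarith [Real.sq_sqrt (Finset.sum_nonneg hS), Real.sqrt_nonneg (∑ i ∈ s, S i)]

namespace IsPartition

variable {N : ℕ} {a b : ℝ} {x : ℕ → ℝ}

lemma le_succ (hp : IsPartition N a b x) {i : ℕ} (hi : i < N - 1) : x i ≤ x (i + 1) :=
  (hp.2.2.2 i hi).le

lemma sum_sub (hp : IsPartition N a b x) :
    ∑ i ∈ Finset.range (N - 1), (x (i + 1) - x i) = b - a := by
  rw [Finset.sum_range_sub, hp.2.2.1, hp.2.1]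

lemma integral_sq_nonneg (hp : IsPartition N a b x) {i : ℕ} (hi : i ∈ Finset.range (N - 1))
    (f : ℝ → ℝ) : 0 ≤ ∫ t in x i..x (i + 1), f t ^ 2 :=
  intervalIntegral.integral_nonneg (hp.le_succ (Finset.mem_range.1 hi)) fun t _ => sq_nonneg (f t)

end IsPartition

namespace IsWeakDerivFam

variable {r N : ℕ} {x : ℕ → ℝ} {v0 : ℕ → ℝ[X]} {vn : ℕ → ℝ} {D : ℕ → ℝ[X]}

lemma nodal_eq_sum_integral (hD : IsWeakDerivFam r N x v0 vn D) (h0 : vn 0 = 0) {j : ℕ}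
    (hj : j ≤ N - 1) : vn j = ∑ i ∈ Finset.range j, ∫ t in x i..x (i + 1), (D i).eval t := by
  induction j with
  | zero => simpa using h0
  | succ j ih =>
    rw [Finset.sum_range_succ, ← ih (by omega), (hD j (by omega)).integral_eq_sub]
    ring

lemma abs_nodal_le {a b : ℝ} (hD : IsWeakDerivFam r N x v0 vn D) (hp : IsPartition N a b x)
    (h0 : vn 0 = 0) {j : ℕ} (hj : j ≤ N - 1) :
    |vn j| ≤ √(b - a) * √(∑ i ∈ Finset.range (N - 1), ∫ t in x i..x (i + 1), (D i).eval t ^ 2) := by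
  rw [hD.nodal_eq_sum_integral h0 hj, ← hp.sum_sub]
  calc |∑ i ∈ Finset.range j, ∫ t in x i..x (i + 1), (D i).eval t|
      ≤ ∑ i ∈ Finset.range j, |∫ t in x i..x (i + 1), (D i).eval t| :=
        Finset.abs_sum_le_sum_abs _ _
    _ ≤ ∑ i ∈ Finset.range (N - 1), |∫ t in x i..x (i + 1), (D i).eval t| :=
        Finset.sum_le_sum_of_subset_of_nonneg (Finset.range_subset_range.2 hj)
          fun _ _ _ => abs_nonneg _
    _ ≤ ∑ i ∈ Finset.range (N - 1),
          √(x (i + 1) - x i) * √(∫ t in x i..x (i + 1), (D i).eval t ^ 2) :=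
        Finset.sum_le_sum fun i hi =>
          abs_intervalIntegral_le (hp.le_succ (Finset.mem_range.1 hi)) (D i).continuous
    _ ≤ _ := sum_sqrt_mul_sqrt_le_of_nonneg _
        (fun i hi => sub_nonneg.2 (hp.le_succ (Finset.mem_range.1 hi)))
        (fun i hi => hp.integral_sq_nonneg hi _)

end IsWeakDerivFam

theorem weak_embedding_general (k r : ℕ) (hkr : k < r) (a b : ℝ)
    (N : ℕ) (x : ℕ → ℝ) (hpart : IsPartition N a b x)
    (h : ℝ) (hmesh : ∀ i < N - 1, x (i + 1) - x i ≤ h)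
    (v0 : ℕ → Polynomial ℝ) (vn : ℕ → ℝ) (D : ℕ → Polynomial ℝ)
    (hv : MemSh k N v0 vn) (hD : IsWeakDerivFam r N x v0 vn D) :
    Real.sqrt (∑ i ∈ Finset.range (N - 1), ∫ t in x i..x (i + 1), ((v0 i).eval t) ^ 2)
      ≤ ((b - a) + h) *
        Real.sqrt (∑ i ∈ Finset.range (N - 1), ∫ t in x i..x (i + 1), ((D i).eval t) ^ 2) := by
  have hN : 0 < N - 1 := by have := hpart.1; omega
  have hh : 0 ≤ h := (sub_nonneg.2 (hpart.le_succ hN)).trans (hmesh 0 hN)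
  have hba : 0 ≤ b - a := hpart.sum_sub ▸
    Finset.sum_nonneg fun i hi => sub_nonneg.2 (hpart.le_succ (Finset.mem_range.1 hi))
  set T := ∑ i ∈ Finset.range (N - 1), ∫ t in x i..x (i + 1), ((D i).eval t) ^ 2
  calc _ ≤ h * √T + √(b - a) * √T * √(∑ i ∈ Finset.range (N - 1), (x (i + 1) - x i)) := by
        refine sqrt_sum_le_of_le_sqrt_mul _ hh (by positivity)
          (fun i hi => hpart.integral_sq_nonneg hi _) (fun i hi => hpart.integral_sq_nonneg hi _)
          (fun i hi => sub_nonneg.2 (hpart.le_succ (Finset.mem_range.1 hi))) fun i hi => ?_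
        have hi := Finset.mem_range.1 hi
        refine ((hD i hi).integral_sq_le hkr (hpart.le_succ hi) (hv.1 i hi)).trans ?_
        gcongr
        · exact hmesh i hi
        · exact hD.abs_nodal_le hpart hv.2 hi
    _ = ((b - a) + h) * √T := by
        rw [hpart.sum_sub, mul_assoc, mul_comm √T, ← mul_assoc, Real.mul_self_sqrt hba]
        ring

/-- Lemma 3.2, weak embedding inequality. Let `k ≥ 0` and `r > k`.
For every partition of `(a,b)` with mesh size `h` and every `v ∈ S_h` with piecewise
discrete weak derivative `D`, the interior component satisfies
`‖v⁰‖_{L²(a,b)} ≤ ((b - a) + h) ‖d_{w,r} v‖_h`. -/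
theorem weak_embedding (k r : ℕ) (hkr : k < r) (a b : ℝ) (hab : a < b)
    (N : ℕ) (x : ℕ → ℝ) (hpart : IsPartition N a b x)
    (h : ℝ) (hmesh : ∀ i < N - 1, x (i + 1) - x i ≤ h)
    (v0 : ℕ → Polynomial ℝ) (vn : ℕ → ℝ) (D : ℕ → Polynomial ℝ)
    (hv : MemSh k N v0 vn) (hD : IsWeakDerivFam r N x v0 vn D) :
    Real.sqrt (∑ i ∈ Finset.range (N - 1), ∫ t in x i..x (i + 1), ((v0 i).eval t) ^ 2)
      ≤ ((b - a) + h) *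
        Real.sqrt (∑ i ∈ Finset.range (N - 1), ∫ t in x i..x (i + 1), ((D i).eval t) ^ 2) :=
  weak_embedding_general k r hkr a b N x hpart h hmesh v0 vn D hv hD
end
end

section
/- Let k ≥ 0, r = k + 1, and let x_i < x_{i+1}. If u is continuously differentiable on [x_i, x_{i+1}], then the discrete weak derivative of the weak function Q_h u = (P_h^k u, u(x_i), u(x_{i+1})) on [x_i, x_{i+1}] equals the L²(x_i, x_{i+1})-orthogonal projection of u′ onto polynomials of degree at most k+1; that is, d_{w,r} Q_h u = P_h^{k+1} u′. -/
open MeasureTheory Set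

noncomputable section

/-- Let `k ≥ 0`, `r = k + 1`, and `x_i < x_{i+1}`. If `u` is continuously
differentiable on `[x_i, x_{i+1}]` (with derivative `u'`), then the discrete weak derivative
of the weak function `Q_h u = (P_h^k u, u(x_i), u(x_{i+1}))` equals the L²-orthogonal
projection of `u'` onto polynomials of degree at most `k+1`, i.e. `d_{w,r} Q_h u = P_h^{k+1} u'`. -/
theorem weak_derivative_of_Qh (k : ℕ) (xi xi1 : ℝ) (hx : xi < xi1)
    (u u' : ℝ → ℝ)
    (hu : ∀ t ∈ Set.Icc xi xi1, HasDerivWithinAt u (u' t) (Set.Icc xi xi1) t)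
    (hu' : ContinuousOn u' (Set.Icc xi xi1))
    (pk : Polynomial ℝ) (hpk : IsL2Proj k xi xi1 u pk)
    (D : Polynomial ℝ)
    (hD : IsWeakDeriv (k + 1) xi xi1 (fun t => pk.eval t) (u xi) (u xi1) D) :
    IsL2Proj (k + 1) xi xi1 u' D := by
  have huIcc : Set.uIcc xi xi1 = Set.Icc xi xi1 := Set.uIcc_of_le hx.le
  have hucont : ContinuousOn u (Set.Icc xi xi1) :=
    fun t ht => (hu t ht).continuousWithinAt
  refine ⟨hD.1, fun q hq => ?_⟩
  -- degree of derivative of q is at most k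
  have hdq : q.derivative.degree ≤ (k : WithBot ℕ) := by
    rcases eq_or_ne q 0 with rfl | hq0
    · simp
    · have hlt : q.derivative.degree < ((k + 1 : ℕ) : WithBot ℕ) :=
        lt_of_lt_of_le (Polynomial.degree_derivative_lt hq0) hq
      cases h : q.derivative.degree with
      | bot => exact bot_le
      | coe n =>
        rw [h] at hlt
        have hn : n < k + 1 := WithBot.coe_lt_coe.mp (by simpa [Nat.cast_withBot] using hlt)
        simpa [Nat.cast_withBot] using WithBot.coe_le_coe.mpr (Nat.lt_succ_iff.mp hn)
  -- integrability facts
  have hInt_u' : IntervalIntegrable u' volume xi xi1 :=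
    (hu'.mono huIcc.le).intervalIntegrable
  have hInt_u : IntervalIntegrable (fun t => u t * q.derivative.eval t) volume xi xi1 :=
    ((hucont.mul q.derivative.continuous.continuousOn).mono huIcc.le).intervalIntegrable
  have hInt_pk : IntervalIntegrable (fun t => pk.eval t * q.derivative.eval t) volume xi xi1 :=
    ((pk.continuous.mul q.derivative.continuous).continuousOn).intervalIntegrable
  have hInt_u'q : IntervalIntegrable (fun t => u' t * q.eval t) volume xi xi1 :=
    (((hu'.mono huIcc.le).mul q.continuous.continuousOn)).intervalIntegrable
  have hInt_Dq : IntervalIntegrable (fun t => D.eval t * q.eval t) volume xi xi1 :=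
    ((D.continuous.mul q.continuous).continuousOn).intervalIntegrable
  -- projection property: ∫ pk q' = ∫ u q'
  have hproj : (∫ t in xi..xi1, pk.eval t * q.derivative.eval t) =
      ∫ t in xi..xi1, u t * q.derivative.eval t := by
    have h0 := hpk.2 q.derivative hdq
    have hsplit : (∫ t in xi..xi1, (u t - pk.eval t) * q.derivative.eval t) =
        (∫ t in xi..xi1, u t * q.derivative.eval t) -
          ∫ t in xi..xi1, pk.eval t * q.derivative.eval t := by
      rw [← intervalIntegral.integral_sub hInt_u hInt_pk]
      congr 1 with t
      ring
    rw [hsplit] at h0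
    linarith
  -- integration by parts
  have hparts : (∫ t in xi..xi1, u' t * q.eval t + u t * q.derivative.eval t) =
      u xi1 * q.eval xi1 - u xi * q.eval xi := by
    apply intervalIntegral.integral_deriv_mul_eq_sub_of_hasDerivWithinAt
    · intro t ht; rw [huIcc] at ht ⊢; exact hu t ht
    · intro t ht; exact (q.hasDerivAt t).hasDerivWithinAt
    · exact hInt_u'
    · exact (q.derivative.continuous.continuousOn).intervalIntegrable
  have hparts' : (∫ t in xi..xi1, u' t * q.eval t) +
      (∫ t in xi..xi1, u t * q.derivative.eval t) =
      u xi1 * q.eval xi1 - u xi * q.eval xi := by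
    rw [← intervalIntegral.integral_add hInt_u'q hInt_u]; exact hparts
  -- weak derivative property
  have hDq := hD.2 q hq
  rw [hproj] at hDq
  have : (∫ t in xi..xi1, (u' t - D.eval t) * q.eval t) =
      (∫ t in xi..xi1, u' t * q.eval t) - ∫ t in xi..xi1, D.eval t * q.eval t := by
    rw [← intervalIntegral.integral_sub hInt_u'q hInt_Dq]
    congr 1 with t
    ring
  rw [this, hDq]
  linarith
end
end

section
/- Let k ≥ 0 and 0 ≤ s ≤ k+1. There exists a constant C > 0 depending only on k and s such that the following holds: for every partition a = x_1 < … < x_N = b of (a,b) and every function u that is (s+1)-times continuously differentiable on [a,b], there exists a function π_h u, continuous on [a,b], which on each element I_i = (x_i, x_{i+1}) is a polynomial of degree at most k+1 and satisfies (i) ∫_{I_i} (π_h u)′ q dx = ∫_{I_i} u′ q dx for all polynomials q of degree at most k, (ii) π_h u(x_i) = u(x_i) for i = 1, …, N, and (iii) ‖u − π_h u‖_{L²(I_i)} + h_i ‖(u − π_h u)′‖_{L²(I_i)} ≤ C h_i^{s+1} ‖u‖_{H^{s+1}(I_i)} on every element, where h_i = x_{i+1} − x_i and ‖u‖_{H^{s+1}(I_i)}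 = (Σ_{j=0}^{s+1} ∫_{I_i} |u^{(j)}|² dx)^{1/2}. -/
/-!
On an element `(c, d)` of length `h`, let `Q` be the `L²` projection of `u'` onto polynomials of
degree `≤ k` and `P` its antiderivative with `P(c) = u(c)`; testing the projection against `q = 1`
gives `P(d) = u(d)`. The Poincaré inequality `∫ F² ≤ h² ∫ F'²` for `F(c) = 0` then does all the
work: applied `s` times it yields a polynomial `r` of degree `< s ≤ k + 1` with
`‖u' - r‖ ≤ h^s ‖u^(s+1)‖`, which bounds `‖u' - Q‖` by best approximation, and applied once more
to `u - P` it gives `‖u - P‖ ≤ h ‖u' - Q‖`. Hence the estimate holds with `C = 2`.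
-/

open MeasureTheory Set

noncomputable section

open Polynomial Topology

namespace Polynomial

variable {K : Type*} [Field K]

def antiderivative (p : K[X]) : K[X] := p.sum fun n a => monomial (n + 1) (a / (n + 1))

theorem coeff_antiderivative_succ (p : K[X]) (n : ℕ) :
    (antiderivative p).coeff (n + 1) = p.coeff n / (n + 1) := by
  rw [antiderivative, coeff_sum, sum_def, Finset.sum_eq_single n]
  · simp
  · intro m _ hmn
    simp [coeff_monomial, hmn]
  · intro hn
    simp [notMem_support_iff.1 hn]

theorem derivative_antiderivative [CharZero K] (p : K[X]) : derivative (antiderivative p) = p := by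
  ext n
  rw [coeff_derivative, coeff_antiderivative_succ]
  field_simp

theorem antiderivative_mem_degreeLT {p : K[X]} {n : ℕ} (hp : p ∈ degreeLT K n) :
    antiderivative p ∈ degreeLT K (n + 1) := by
  rw [mem_degreeLT, degree_lt_iff_coeff_zero] at hp ⊢
  rintro (_ | m) hm
  · omega
  · rw [coeff_antiderivative_succ, hp m (by omega), zero_div]

theorem exists_mem_degreeLT_derivative_eq_eval_eq [CharZero K] {q : K[X]} {n : ℕ}
    (hq : q ∈ degreeLT K n) (c v : K) :
    ∃ p ∈ degreeLT K (n + 1), derivative p = q ∧ p.eval c = v := by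
  refine ⟨C (v - (antiderivative q).eval c) + antiderivative q,
    add_mem (mem_degreeLT.2 (degree_C_le.trans_lt (by exact_mod_cast n.succ_pos)))
      (antiderivative_mem_degreeLT hq), ?_, by simp⟩
  simp [derivative_antiderivative]

theorem eq_zero_of_integral_eval_mul_self_eq_zero {c d : ℝ} (hcd : c < d) {p : ℝ[X]}
    (h : ∫ t in c..d, p.eval t * p.eval t = 0) : p = 0 := by
  by_contra hp
  obtain ⟨t, ht, hroot⟩ := ((Icc_infinite hcd).sdiff p.roots.toFinset.finite_toSet).nonempty
  refine (intervalIntegral.integral_pos hcd (by fun_prop) (fun _ _ => mul_self_nonneg _)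
    ⟨t, ht, mul_self_pos.2 ?_⟩).ne' h
  simpa [hp] using hroot

def l2Form (c d : ℝ) : LinearMap.BilinForm ℝ ℝ[X] :=
  LinearMap.mk₂ ℝ (fun p q => ∫ t in c..d, p.eval t * q.eval t)
    (fun p₁ p₂ q => by
      simp only [eval_add, add_mul]
      exact intervalIntegral.integral_add ((p₁.continuous.mul q.continuous).intervalIntegrable _ _)
        ((p₂.continuous.mul q.continuous).intervalIntegrable _ _))
    (fun a p q => by simp [mul_assoc])
    (fun p q₁ q₂ => by
      simp only [eval_add, mul_add]
      exact intervalIntegral.integral_add ((p.continuous.mul q₁.continuous).intervalIntegrable _ _)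
        ((p.continuous.mul q₂.continuous).intervalIntegrable _ _))
    (fun a p q => by simp [mul_left_comm])

end Polynomial

theorem sqrt_add_mul_sqrt_le {A B Y h : ℝ} {s : ℕ} (hh : 0 ≤ h) (hA : A ≤ h ^ 2 * B)
    (hB : B ≤ h ^ (2 * s) * Y) : √A + h * √B ≤ 2 * h ^ (s + 1) * √Y := by
  have hA' : √A ≤ h * √B :=
    calc √A ≤ √(h ^ 2 * B) := Real.sqrt_le_sqrt hA
      _ = h * √B := by rw [Real.sqrt_mul (sq_nonneg h), Real.sqrt_sq hh]
  have hB' : √B ≤ h ^ s * √Y :=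
    calc √B ≤ √((h ^ s) ^ 2 * Y) := Real.sqrt_le_sqrt (by rwa [← pow_mul, mul_comm s])
      _ = h ^ s * √Y := by rw [Real.sqrt_mul (sq_nonneg _), Real.sqrt_sq (pow_nonneg hh s)]
  calc √A + h * √B ≤ 2 * (h * √B) := by linarith
    _ ≤ 2 * (h * (h ^ s * √Y)) := by gcongr
    _ = 2 * h ^ (s + 1) * √Y := by ring

theorem hasDerivAt_iteratedDerivWithin {n : WithTop ℕ∞} {u : ℝ → ℝ} {S : Set ℝ} {j : ℕ}
    (hu : ContDiffOn ℝ n u S) (hS : UniqueDiffOn ℝ S) (hj : (j : WithTop ℕ∞) < n) {t : ℝ}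
    (ht : S ∈ 𝓝 t) :
    HasDerivAt (iteratedDerivWithin j u S) (iteratedDerivWithin (j + 1) u S t) t := by
  rw [iteratedDerivWithin_succ]
  exact ((hu.differentiableOn_iteratedDerivWithin hj hS) t
    (mem_of_mem_nhds ht)).hasDerivWithinAt.hasDerivAt ht

theorem IsPartition.mem_Icc {N : ℕ} {a b : ℝ} {x : ℕ → ℝ} (hx : IsPartition N a b x) {i : ℕ}
    (hi : i ≤ N - 1) : x i ∈ Icc a b := by
  obtain ⟨-, hxa, hxb, hlt⟩ := hx
  have hmono : ∀ i j, i ≤ j → j ≤ N - 1 → x i ≤ x j := by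
    intro i j hij
    induction j, hij using Nat.le_induction with
    | base => exact fun _ => le_rfl
    | succ j _ ih => exact fun hj => (ih (by omega)).trans (hlt j (by omega)).le
  exact ⟨hxa ▸ hmono 0 i i.zero_le hi, hxb ▸ hmono i (N - 1) hi le_rfl⟩

section Interval

variable {c d : ℝ}

theorem sq_integral_le_mul_integral_sq (hcd : c ≤ d) {f : ℝ → ℝ} (hf : ContinuousOn f (Icc c d)) :
    (∫ t in c..d, f t) ^ 2 ≤ (d - c) * ∫ t in c..d, f t ^ 2 := by
  rcases hcd.eq_or_lt with rfl | hlt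
  · simp
  have hf2 : IntervalIntegrable (fun t => f t ^ 2) volume c d :=
    (hf.pow 2).intervalIntegrable_of_Icc hcd
  have hf1 : IntervalIntegrable f volume c d := hf.intervalIntegrable_of_Icc hcd
  have hvar : 0 ≤ (d - c) * ((d - c) * (∫ t in c..d, f t ^ 2) - (∫ t in c..d, f t) ^ 2) := by
    calc (0 : ℝ) ≤ ∫ t in c..d, ((d - c) * f t - ∫ τ in c..d, f τ) ^ 2 :=
          intervalIntegral.integral_nonneg hcd fun t _ => sq_nonneg _
      _ = _ := by
        have hpt : ∀ t, ((d - c) * f t - ∫ τ in c..d, f τ) ^ 2 = (d - c) ^ 2 * f t ^ 2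
            - (2 * (d - c) * ∫ τ in c..d, f τ) * f t + (∫ τ in c..d, f τ) ^ 2 := fun t => by ring
        simp_rw [hpt]
        rw [intervalIntegral.integral_add ((hf2.const_mul _).sub (hf1.const_mul _))
            intervalIntegrable_const,
          intervalIntegral.integral_sub (hf2.const_mul _) (hf1.const_mul _),
          intervalIntegral.integral_const_mul, intervalIntegral.integral_const_mul,
          intervalIntegral.integral_const, smul_eq_mul]
        ring
  linarith [(mul_nonneg_iff_of_pos_left (sub_pos.2 hlt)).1 hvar]

theorem integral_sq_le_of_hasDerivAt (hcd : c ≤ d) {F f : ℝ → ℝ} (hF : ContinuousOn F (Icc c d))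
    (hFc : F c = 0) (hF' : ∀ t ∈ Ioo c d, HasDerivAt F (f t) t) (hf : ContinuousOn f (Icc c d)) :
    ∫ t in c..d, F t ^ 2 ≤ (d - c) ^ 2 * ∫ t in c..d, f t ^ 2 := by
  have hpoint : ∀ t ∈ Icc c d, F t ^ 2 ≤ (d - c) * ∫ τ in c..d, f τ ^ 2 := by
    rintro t ⟨hct, htd⟩
    have hsub : Icc c t ⊆ Icc c d := Icc_subset_Icc_right htd
    have hFt : ∫ τ in c..t, f τ = F t := by
      rw [intervalIntegral.integral_eq_sub_of_hasDeriv_right_of_le hct (hF.mono hsub)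
        (fun x hx => (hF' x ⟨hx.1, hx.2.trans_le htd⟩).hasDerivWithinAt)
        ((hf.mono hsub).intervalIntegrable_of_Icc hct), hFc, sub_zero]
    calc F t ^ 2 ≤ (t - c) * ∫ τ in c..t, f τ ^ 2 :=
          hFt ▸ sq_integral_le_mul_integral_sq hct (hf.mono hsub)
      _ ≤ (d - c) * ∫ τ in c..d, f τ ^ 2 := by
        gcongr
        · exact intervalIntegral.integral_nonneg hct fun _ _ => sq_nonneg _
        · exact intervalIntegral.integral_mono_interval le_rfl hct htd
            (Filter.Eventually.of_forall fun _ => sq_nonneg _)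
            ((hf.pow 2).intervalIntegrable_of_Icc hcd)
  calc ∫ t in c..d, F t ^ 2 ≤ ∫ _ in c..d, (d - c) * ∫ τ in c..d, f τ ^ 2 :=
        intervalIntegral.integral_mono_on hcd ((hF.pow 2).intervalIntegrable_of_Icc hcd)
          intervalIntegrable_const hpoint
    _ = (d - c) ^ 2 * ∫ t in c..d, f t ^ 2 := by
        rw [intervalIntegral.integral_const, smul_eq_mul]; ring

theorem exists_integral_sq_sub_eval_le (hcd : c ≤ d) :
    ∀ (s : ℕ) (G : ℕ → ℝ → ℝ), (∀ j ≤ s, ContinuousOn (G j) (Icc c d)) →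
      (∀ j < s, ∀ t ∈ Ioo c d, HasDerivAt (G j) (G (j + 1) t) t) →
      ∃ r ∈ degreeLT ℝ s,
        ∫ t in c..d, (G 0 t - r.eval t) ^ 2 ≤ (d - c) ^ (2 * s) * ∫ t in c..d, G s t ^ 2
  | 0, G, _, _ => ⟨0, zero_mem _, by simp⟩
  | s + 1, G, hG, hG' => by
    obtain ⟨r', hr', hle⟩ := exists_integral_sq_sub_eval_le hcd s (fun j => G (j + 1))
      (fun j hj => hG _ (by omega)) (fun j hj t ht => hG' _ (by omega) t ht)
    obtain ⟨r, hr, hrr', hrc⟩ := exists_mem_degreeLT_derivative_eq_eval_eq hr' c (G 0 c)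
    refine ⟨r, hr, ?_⟩
    calc ∫ t in c..d, (G 0 t - r.eval t) ^ 2
        ≤ (d - c) ^ 2 * ∫ t in c..d, (G 1 t - r'.eval t) ^ 2 :=
          integral_sq_le_of_hasDerivAt hcd ((hG 0 (by omega)).sub r.continuous.continuousOn)
            (by rw [hrc, sub_self])
            (fun t ht => hrr' ▸ (hG' 0 (by omega) t ht).sub (r.hasDerivAt t))
            ((hG 1 (by omega)).sub r'.continuous.continuousOn)
      _ ≤ (d - c) ^ 2 * ((d - c) ^ (2 * s) * ∫ t in c..d, G (s + 1) t ^ 2) := by gcongr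
      _ = (d - c) ^ (2 * (s + 1)) * ∫ t in c..d, G (s + 1) t ^ 2 := by ring

theorem integral_sub_eval_mul_eval (hcd : c ≤ d) {g : ℝ → ℝ} (hg : ContinuousOn g (Icc c d))
    (p q : ℝ[X]) :
    ∫ t in c..d, (g t - p.eval t) * q.eval t
      = (∫ t in c..d, g t * q.eval t) - ∫ t in c..d, p.eval t * q.eval t := by
  simp only [sub_mul]
  exact intervalIntegral.integral_sub
    ((hg.mul q.continuous.continuousOn).intervalIntegrable_of_Icc hcd)
    ((p.continuous.mul q.continuous).intervalIntegrable _ _)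

theorem exists_isL2Proj (l : ℕ) (hcd : c < d) {g : ℝ → ℝ} (hg : ContinuousOn g (Icc c d)) :
    ∃ p, IsL2Proj l c d g p := by
  let V := degreeLT ℝ (l + 1)
  have : FiniteDimensional ℝ V := (degreeLTEquiv ℝ (l + 1)).symm.finiteDimensional
  have hgq : ∀ q : ℝ[X], IntervalIntegrable (fun t => g t * q.eval t) volume c d :=
    fun q => (hg.mul q.continuous.continuousOn).intervalIntegrable_of_Icc hcd.le
  let L : Module.Dual ℝ V :=
    { toFun := fun q => ∫ t in c..d, g t * (q : ℝ[X]).eval t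
      map_add' := fun q₁ q₂ => by
        simp only [Submodule.coe_add, eval_add, mul_add]
        exact intervalIntegral.integral_add (hgq _) (hgq _)
      map_smul' := fun a q => by simp [mul_left_comm] }
  have hB : ((l2Form c d).restrict V).Nondegenerate :=
    ⟨fun p hp => Subtype.ext (eq_zero_of_integral_eval_mul_self_eq_zero hcd (hp p)),
      fun p hp => Subtype.ext (eq_zero_of_integral_eval_mul_self_eq_zero hcd (hp p))⟩
  set p := (((l2Form c d).restrict V).toDual hB).symm L
  have hp : ∀ q : V, ∫ t in c..d, (p : ℝ[X]).eval t * (q : ℝ[X]).eval t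
      = ∫ t in c..d, g t * (q : ℝ[X]).eval t := fun q =>
    LinearMap.congr_fun ((((l2Form c d).restrict V).toDual hB).apply_symm_apply L) q
  have hV : ∀ {q : ℝ[X]}, q.degree ≤ l ↔ q ∈ V := by
    simp [V, degreeLT_succ_eq_degreeLE, mem_degreeLE]
  refine ⟨p, hV.2 p.2, fun q hq => ?_⟩
  rw [integral_sub_eval_mul_eval hcd.le hg, ← hp ⟨q, hV.1 hq⟩, sub_self]

theorem IsL2Proj.integral_mul_eq (hcd : c ≤ d) {l : ℕ} {g : ℝ → ℝ} {p : ℝ[X]}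
    (h : IsL2Proj l c d g p) (hg : ContinuousOn g (Icc c d)) {q : ℝ[X]} (hq : q.degree ≤ l) :
    ∫ t in c..d, p.eval t * q.eval t = ∫ t in c..d, g t * q.eval t := by
  rw [eq_comm, ← sub_eq_zero, ← integral_sub_eval_mul_eval hcd hg, h.2 q hq]

theorem IsL2Proj.integral_sq_sub_le (hcd : c ≤ d) {l : ℕ} {g : ℝ → ℝ} {p : ℝ[X]}
    (h : IsL2Proj l c d g p) (hg : ContinuousOn g (Icc c d)) {r : ℝ[X]} (hr : r.degree ≤ l) :
    ∫ t in c..d, (g t - p.eval t) ^ 2 ≤ ∫ t in c..d, (g t - r.eval t) ^ 2 := by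
  have hgp : ContinuousOn (fun t => g t - p.eval t) (Icc c d) := hg.sub p.continuous.continuousOn
  -- Pythagoras: `g - r = (g - p) + (p - r)` with `p - r ⊥ g - p`
  have hcross : ∫ t in c..d, (g t - p.eval t) * (p - r).eval t = 0 :=
    h.2 _ ((degree_sub_le p r).trans (max_le h.1 hr))
  have hsplit : ∀ t, (g t - r.eval t) ^ 2
      = (g t - p.eval t) ^ 2 + (2 * ((g t - p.eval t) * (p - r).eval t) + (p - r).eval t ^ 2) :=
    fun t => by simp only [eval_sub]; ring
  have hgp2 : IntervalIntegrable (fun t => (g t - p.eval t) ^ 2) volume c d :=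
    (hgp.pow 2).intervalIntegrable_of_Icc hcd
  have hgpq : IntervalIntegrable (fun t => 2 * ((g t - p.eval t) * (p - r).eval t)) volume c d :=
    ((hgp.mul (p - r).continuous.continuousOn).intervalIntegrable_of_Icc hcd).const_mul 2
  have hq2 : IntervalIntegrable (fun t => (p - r).eval t ^ 2) volume c d :=
    ((p - r).continuous.pow 2).intervalIntegrable _ _
  simp_rw [hsplit]
  rw [intervalIntegral.integral_add hgp2 (hgpq.add hq2), intervalIntegral.integral_add hgpq hq2,
    intervalIntegral.integral_const_mul, hcross, mul_zero, zero_add, le_add_iff_nonneg_right]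
  exact intervalIntegral.integral_nonneg hcd fun _ _ => sq_nonneg _

theorem exists_interpolant_isL2Proj_derivative {k s : ℕ} (hs : s ≤ k + 1) (hcd : c < d)
    {u : ℝ → ℝ} {G : ℕ → ℝ → ℝ} (hu : ContinuousOn u (Icc c d))
    (hu' : ∀ t ∈ Ioo c d, HasDerivAt u (G 0 t) t) (hG : ∀ j ≤ s, ContinuousOn (G j) (Icc c d))
    (hG' : ∀ j < s, ∀ t ∈ Ioo c d, HasDerivAt (G j) (G (j + 1) t) t) :
    ∃ P : ℝ[X], P.degree ≤ ((k + 1 : ℕ) : WithBot ℕ) ∧ IsL2Proj k c d (G 0) (derivative P) ∧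
      P.eval c = u c ∧ P.eval d = u d ∧
      √(∫ t in c..d, (u t - P.eval t) ^ 2)
          + (d - c) * √(∫ t in c..d, (G 0 t - (derivative P).eval t) ^ 2)
        ≤ 2 * (d - c) ^ (s + 1) * √(∫ t in c..d, G s t ^ 2) := by
  have hdeg : ∀ {n : ℕ} {q : ℝ[X]}, q ∈ degreeLT ℝ (n + 1) ↔ q.degree ≤ n := by
    simp [degreeLT_succ_eq_degreeLE, mem_degreeLE]
  have hG0 := hG 0 s.zero_le
  obtain ⟨Q, hQ⟩ := exists_isL2Proj k hcd hG0
  obtain ⟨P, hP, hPQ, hPc⟩ := exists_mem_degreeLT_derivative_eq_eval_eq (hdeg.2 hQ.1) c (u c)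
  have hPd : P.eval d = u d := by
    have hmean := hQ.integral_mul_eq hcd.le hG0 (q := 1) (degree_one_le.trans (by simp))
    simp only [eval_one, mul_one] at hmean
    rw [← hPQ, intervalIntegral.integral_eq_sub_of_hasDerivAt (fun t _ => P.hasDerivAt t)
        (P.derivative.continuous.intervalIntegrable _ _),
      intervalIntegral.integral_eq_sub_of_hasDeriv_right_of_le hcd.le hu
        (fun t ht => (hu' t ht).hasDerivWithinAt) (hG0.intervalIntegrable_of_Icc hcd.le),
      hPc] at hmean
    linarith
  have hbest :
      ∫ t in c..d, (G 0 t - Q.eval t) ^ 2 ≤ (d - c) ^ (2 * s) * ∫ t in c..d, G s t ^ 2 := by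
    obtain ⟨r, hr, hle⟩ := exists_integral_sq_sub_eval_le hcd.le s G hG hG'
    exact (hQ.integral_sq_sub_le hcd.le hG0 (hdeg.1 (degreeLT_mono hs hr))).trans hle
  have hinterp : ∫ t in c..d, (u t - P.eval t) ^ 2
      ≤ (d - c) ^ 2 * ∫ t in c..d, (G 0 t - Q.eval t) ^ 2 :=
    integral_sq_le_of_hasDerivAt hcd.le (hu.sub P.continuous.continuousOn) (by rw [hPc, sub_self])
      (fun t ht => hPQ ▸ (hu' t ht).sub (P.hasDerivAt t)) (hG0.sub Q.continuous.continuousOn)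
  refine ⟨P, hdeg.1 hP, hPQ ▸ hQ, hPc, hPd, ?_⟩
  rw [hPQ]
  exact sqrt_add_mul_sqrt_le (sub_pos.2 hcd).le hinterp hbest

end Interval

theorem exists_local_projection {k s : ℕ} (hs : s ≤ k + 1) {a b c d : ℝ} (hac : a ≤ c)
    (hcd : c < d) (hdb : d ≤ b) {u : ℝ → ℝ} (hu : ContDiffOn ℝ (s + 1) u (Icc a b)) :
    ∃ P : ℝ[X], P.degree ≤ ((k + 1 : ℕ) : WithBot ℕ) ∧
      (∀ q : ℝ[X], q.degree ≤ (k : WithBot ℕ) →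
        ∫ t in c..d, (derivative P).eval t * q.eval t
          = ∫ t in c..d, derivWithin u (Icc a b) t * q.eval t) ∧
      (P.eval c = u c ∧ P.eval d = u d) ∧
      √(∫ t in c..d, (u t - P.eval t) ^ 2)
          + (d - c) * √(∫ t in c..d, (derivWithin u (Icc a b) t - (derivative P).eval t) ^ 2)
        ≤ 2 * (d - c) ^ (s + 1) * √(∑ j ∈ Finset.range (s + 2),
            ∫ t in c..d, (iteratedDerivWithin j u (Icc a b) t) ^ 2) := by
  have hS : UniqueDiffOn ℝ (Icc a b) := uniqueDiffOn_Icc (hac.trans_lt (hcd.trans_le hdb))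
  have hsub : Icc c d ⊆ Icc a b := Icc_subset_Icc hac hdb
  have hnhds : ∀ t ∈ Ioo c d, Icc a b ∈ 𝓝 t :=
    fun t ht => Icc_mem_nhds (hac.trans_lt ht.1) (ht.2.trans_le hdb)
  have hG : ∀ j ≤ s + 1, ContinuousOn (iteratedDerivWithin j u (Icc a b)) (Icc c d) :=
    fun j hj => (hu.continuousOn_iteratedDerivWithin (by exact_mod_cast hj) hS).mono hsub
  have hG' : ∀ j < s + 1, ∀ t ∈ Ioo c d, HasDerivAt (iteratedDerivWithin j u (Icc a b))
      (iteratedDerivWithin (j + 1) u (Icc a b) t) t :=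
    fun j hj t ht => hasDerivAt_iteratedDerivWithin hu hS (by exact_mod_cast hj) (hnhds t ht)
  obtain ⟨P, hdeg, hproj, hPc, hPd, hest⟩ :=
    exists_interpolant_isL2Proj_derivative (G := fun j => iteratedDerivWithin (j + 1) u (Icc a b))
      hs hcd (hu.continuousOn.mono hsub) (fun t ht => by simpa using hG' 0 s.succ_pos t ht)
      (fun j hj => hG (j + 1) (by omega)) (fun j hj => hG' (j + 1) (by omega))
  simp only [zero_add, iteratedDerivWithin_one] at hproj hest
  refine ⟨P, hdeg, fun q hq => hproj.integral_mul_eq hcd.le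
    (iteratedDerivWithin_one (f := u) ▸ hG 1 (by omega)) hq, ⟨hPc, hPd⟩,
    hest.trans ?_⟩
  gcongr
  exact Finset.single_le_sum (f := fun j => ∫ t in c..d, (iteratedDerivWithin j u (Icc a b) t) ^ 2)
    (fun j _ => intervalIntegral.integral_nonneg hcd.le fun _ _ => sq_nonneg _)
    (Finset.mem_range.2 (by omega))

/-- Lemma 4.1, the projection `π_h`. Let `k ≥ 0` and `0 ≤ s ≤ k + 1`.
There is a constant `C > 0` depending only on `k` and `s` such that for every partition of
`(a,b)` and every `(s+1)`-times continuously differentiable `u` on `[a,b]` there are element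
polynomials `P i` of degree at most `k+1` (the pieces of `π_h u`, which match `u` at the
nodes and hence glue to a continuous function) such that
(i) `∫_{I_i} (π_h u)' q = ∫_{I_i} u' q` for all polynomials `q` of degree ≤ `k`,
(ii) `π_h u (x_i) = u (x_i)` at all nodes, and
(iii) `‖u - π_h u‖_{L²(I_i)} + h_i ‖(u - π_h u)'‖_{L²(I_i)} ≤ C h_i^{s+1} ‖u‖_{H^{s+1}(I_i)}`. -/
theorem pih_projection_exists (k s : ℕ) (hs : s ≤ k + 1) :
    ∃ C > (0 : ℝ), ∀ (a b : ℝ) (N : ℕ) (x : ℕ → ℝ), IsPartition N a b x →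
      ∀ u : ℝ → ℝ, ContDiffOn ℝ (s + 1) u (Set.Icc a b) →
      ∃ P : ℕ → Polynomial ℝ,
        (∀ i < N - 1, (P i).degree ≤ ((k + 1 : ℕ) : WithBot ℕ)) ∧
        (∀ i < N - 1, ∀ q : Polynomial ℝ, q.degree ≤ (k : WithBot ℕ) →
          (∫ t in x i..x (i + 1), (P i).derivative.eval t * q.eval t)
            = ∫ t in x i..x (i + 1), derivWithin u (Set.Icc a b) t * q.eval t) ∧
        (∀ i < N - 1, (P i).eval (x i) = u (x i) ∧ (P i).eval (x (i + 1)) = u (x (i + 1))) ∧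
        (∀ i < N - 1,
          Real.sqrt (∫ t in x i..x (i + 1), (u t - (P i).eval t) ^ 2)
            + (x (i + 1) - x i) *
              Real.sqrt (∫ t in x i..x (i + 1),
                (derivWithin u (Set.Icc a b) t - (P i).derivative.eval t) ^ 2)
          ≤ C * (x (i + 1) - x i) ^ (s + 1) *
              Real.sqrt (∑ j ∈ Finset.range (s + 2),
                ∫ t in x i..x (i + 1), (iteratedDerivWithin j u (Set.Icc a b) t) ^ 2)) := by
  refine ⟨2, two_pos, fun a b N x hx u hu => ?_⟩
  choose! P hP using fun i (hi : i < N - 1) =>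
    exists_local_projection hs (hx.mem_Icc hi.le).1 (hx.2.2.2 i hi) (hx.mem_Icc hi).2 hu
  exact ⟨P, fun i hi => (hP i hi).1, fun i hi => (hP i hi).2.1, fun i hi => (hP i hi).2.2.1,
    fun i hi => (hP i hi).2.2.2⟩

end
end

section
/- Let k ≥ 0 and r = k + 1. Suppose a_2 is continuously differentiable with a_2 > 0 on [a,b], a_0 is continuous with a_0 ≥ 0, and u is twice continuously differentiable on [a,b] and solves −(a_2 u′)′ + a_0 u = f on (a,b) with u(a) = 0 and u′(b) = 0. Then for every partition a = x_1 < … < x_N = b, u satisfies the identity (π_h(a_2 u′), d_{w,r}v)_h + (a_0 u, v^0)_{L²(a,b)} = (f, v^0)_{L²(a,b)} for all v ∈ S_h. -/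
open MeasureTheory Set

noncomputable section

/-- The Sobolev norm `‖u‖_m = (∑_{j=0}^m ∫_a^b |u^{(j)}|² dx)^{1/2}` of an `m`-times
continuously differentiable function on `[a,b]`. -/
def sobNorm (m : ℕ) (a b : ℝ) (u : ℝ → ℝ) : ℝ :=
  Real.sqrt (∑ j ∈ Finset.range (m + 1),
    ∫ t in a..b, (iteratedDerivWithin j u (Set.Icc a b) t) ^ 2)

/-- `u` solves the two-point boundary value problem
`-(a2 u')' + a0 u = f` on `(a,b)`, `u(a) = 0`, `u'(b) = 0`. -/
def SolvesBVP (a b : ℝ) (a2 a0 f u : ℝ → ℝ) : Prop :=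
  (∀ x ∈ Set.Ioo a b,
    -(derivWithin (fun t => a2 t * derivWithin u (Set.Icc a b) t) (Set.Icc a b) x)
      + a0 x * u x = f x) ∧
  u a = 0 ∧ derivWithin u (Set.Icc a b) b = 0

/-!
On an element `(c, d)`, test the definition of the weak derivative of `v` with the polynomial
`π_h g`, `g = a₂ u'`. Since `(π_h g)' = P_h^k g'` and `v⁰` has degree at most `k`, the interior
term becomes `∫ g' v⁰ = ∫ (a₀ u - f) v⁰`; testing the projection with `1` shows that `π_h g`
interpolates `g` at both nodes. Each element therefore contributes
`v(d) g(d) - v(c) g(c)`, and these telescope to `v(b) g(b) - v(a) g(a) = 0`, because `v(a) = 0`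
and `g(b) = a₂(b) u'(b) = 0`.
-/

open Polynomial

namespace IsPartition

variable {N : ℕ} {a b : ℝ} {x : ℕ → ℝ}

theorem strictMonoOn (hx : IsPartition N a b x) : StrictMonoOn x (Iic (N - 1)) :=
  strictMonoOn_Iic_of_lt_succ fun m hm => by simpa using hx.2.2.2 m hm

theorem mem_Icc_s9 (hx : IsPartition N a b x) {j : ℕ} (hj : j ≤ N - 1) : x j ∈ Icc a b := by
  constructor
  · rw [← hx.2.1]
    exact hx.strictMonoOn.monotoneOn (by simp) (by simpa) (Nat.zero_le j)
  · rw [← hx.2.2.1]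
    exact hx.strictMonoOn.monotoneOn (by simpa) (by simp) hj

theorem Icc_subset_Icc (hx : IsPartition N a b x) {i : ℕ} (hi : i < N - 1) :
    Icc (x i) (x (i + 1)) ⊆ Icc a b :=
  Set.Icc_subset_Icc (hx.mem_Icc_s9 (by omega)).1 (hx.mem_Icc_s9 hi).2

theorem Ioo_subset_Ioo (hx : IsPartition N a b x) {i : ℕ} (hi : i < N - 1) :
    Ioo (x i) (x (i + 1)) ⊆ Ioo a b :=
  Set.Ioo_subset_Ioo (hx.mem_Icc_s9 (by omega)).1 (hx.mem_Icc_s9 hi).2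

end IsPartition

theorem eval_eq_of_integral_derivative_eq {p : ℝ[X]} {g g' : ℝ → ℝ} {c d : ℝ} (hcd : c ≤ d)
    (hg : ContinuousOn g (Icc c d)) (hderiv : ∀ t ∈ Ioo c d, HasDerivAt g (g' t) t)
    (hg' : IntervalIntegrable g' volume c d)
    (hint : ∫ t in c..d, p.derivative.eval t = ∫ t in c..d, g' t) (hc : p.eval c = g c) :
    p.eval d = g d := by
  rw [intervalIntegral.integral_eq_sub_of_hasDerivAt (fun t _ => p.hasDerivAt t)
      (p.derivative.continuous.intervalIntegrable _ _),
    intervalIntegral.integral_eq_sub_of_hasDerivAt_of_le hcd hg hderiv hg'] at hint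
  linarith

theorem integral_interpolant_mul_weakDeriv {k : ℕ} {c d : ℝ} (hcd : c < d) {g g' w f : ℝ → ℝ}
    (hg : ContinuousOn g (Icc c d)) (hderiv : ∀ t ∈ Ioo c d, HasDerivAt g (g' t) t)
    (hg' : ContinuousOn g' (Icc c d)) (hw : ContinuousOn w (Icc c d))
    (hf : ∀ t ∈ Ioo c d, f t = w t - g' t)
    {p : ℝ[X]} (hp : p.degree ≤ ((k + 1 : ℕ) : WithBot ℕ)) (hpc : p.eval c = g c)
    (hproj : ∀ q : ℝ[X], q.degree ≤ (k : WithBot ℕ) →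
      ∫ t in c..d, p.derivative.eval t * q.eval t = ∫ t in c..d, g' t * q.eval t)
    {v D : ℝ[X]} {vl vr : ℝ} (hv : v.degree ≤ (k : WithBot ℕ))
    (hD : IsWeakDeriv (k + 1) c d (fun t => v.eval t) vl vr D) :
    (∫ t in c..d, p.eval t * D.eval t) + (∫ t in c..d, w t * v.eval t)
      - ∫ t in c..d, f t * v.eval t = vr * g d - vl * g c := by
  have hpd : p.eval d = g d := by
    refine eval_eq_of_integral_derivative_eq hcd.le hg hderiv
      (hg'.intervalIntegrable_of_Icc hcd.le) ?_ hpc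
    simpa using hproj 1 (by simp)
  have hweak := hD.2 p hp
  have hint_v := hproj v hv
  have hf_v : ∫ t in c..d, f t * v.eval t
      = (∫ t in c..d, w t * v.eval t) - ∫ t in c..d, g' t * v.eval t := by
    have hwv : IntervalIntegrable (fun t => w t * v.eval t) volume c d :=
      (hw.mul v.continuous.continuousOn).intervalIntegrable_of_Icc hcd.le
    have hg'v : IntervalIntegrable (fun t => g' t * v.eval t) volume c d :=
      (hg'.mul v.continuous.continuousOn).intervalIntegrable_of_Icc hcd.le
    rw [← intervalIntegral.integral_sub hwv hg'v]
    exact intervalIntegral.integral_congr_Ioo_of_le hcd.le fun t ht => by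
      simp only [hf t ht, sub_mul]
  simp only [mul_comm (p.eval _), mul_comm (v.eval _) (p.derivative.eval _)] at hweak ⊢
  rw [hweak, hint_v, hf_v, hpc, hpd]
  ring

theorem exact_solution_identity_general (k : ℕ) (a b : ℝ) (hab : a < b) (a2 a0 f u : ℝ → ℝ)
    (ha2 : ContDiffOn ℝ 1 a2 (Set.Icc a b))
    (ha0c : ContinuousOn a0 (Set.Icc a b))
    (hu : ContDiffOn ℝ 2 u (Set.Icc a b))
    (hbvp : SolvesBVP a b a2 a0 f u)
    (N : ℕ) (x : ℕ → ℝ) (hpart : IsPartition N a b x)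
    (ph : ℕ → Polynomial ℝ)
    (hph : ∀ i < N - 1, (ph i).degree ≤ ((k + 1 : ℕ) : WithBot ℕ) ∧
      (ph i).eval (x i) = a2 (x i) * derivWithin u (Set.Icc a b) (x i) ∧
      ∀ q : Polynomial ℝ, q.degree ≤ (k : WithBot ℕ) →
        (∫ t in x i..x (i + 1), (ph i).derivative.eval t * q.eval t)
          = ∫ t in x i..x (i + 1),
              derivWithin (fun s => a2 s * derivWithin u (Set.Icc a b) s) (Set.Icc a b) t
                * q.eval t)
    (v0 : ℕ → Polynomial ℝ) (vn : ℕ → ℝ) (Dv : ℕ → Polynomial ℝ)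
    (hv : MemSh k N v0 vn) (hDv : IsWeakDerivFam (k + 1) N x v0 vn Dv) :
    ((∑ i ∈ Finset.range (N - 1), ∫ t in x i..x (i + 1), (ph i).eval t * (Dv i).eval t)
      + ∑ i ∈ Finset.range (N - 1), ∫ t in x i..x (i + 1), a0 t * u t * (v0 i).eval t)
      = ∑ i ∈ Finset.range (N - 1), ∫ t in x i..x (i + 1), f t * (v0 i).eval t := by
  have hIcc : UniqueDiffOn ℝ (Icc a b) := uniqueDiffOn_Icc hab
  set g : ℝ → ℝ := fun t => a2 t * derivWithin u (Icc a b) t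
  have hg : ContDiffOn ℝ 1 g (Icc a b) := ha2.mul (hu.derivWithin hIcc (by norm_num))
  have hg' := hg.continuousOn_derivWithin hIcc le_rfl
  have hderiv (t : ℝ) (ht : t ∈ Ioo a b) : HasDerivAt g (derivWithin g (Icc a b) t) t :=
    (hg.differentiableOn one_ne_zero t (Ioo_subset_Icc_self ht)).hasDerivWithinAt.hasDerivAt
      (Icc_mem_nhds ht.1 ht.2)
  have hode (t : ℝ) (ht : t ∈ Ioo a b) : f t = a0 t * u t - derivWithin g (Icc a b) t := by
    rw [← hbvp.1 t ht]
    ring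
  have helement : ∀ i ∈ Finset.range (N - 1),
      (∫ t in x i..x (i + 1), (ph i).eval t * (Dv i).eval t)
        + (∫ t in x i..x (i + 1), a0 t * u t * (v0 i).eval t)
        - ∫ t in x i..x (i + 1), f t * (v0 i).eval t
      = vn (i + 1) * g (x (i + 1)) - vn i * g (x i) := fun i hi => by
    rw [Finset.mem_range] at hi
    have hsub := hpart.Icc_subset_Icc hi
    exact integral_interpolant_mul_weakDeriv (hpart.2.2.2 i hi) (hg.continuousOn.mono hsub)
      (fun t ht => hderiv t (hpart.Ioo_subset_Ioo hi ht)) (hg'.mono hsub)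
      ((ha0c.mul hu.continuousOn).mono hsub)
      (fun t ht => hode t (hpart.Ioo_subset_Ioo hi ht))
      (hph i hi).1 (hph i hi).2.1 (hph i hi).2.2 (hv.1 i hi) (hDv i hi)
  have hsum := Finset.sum_congr rfl helement
  have hgb : g (x (N - 1)) = 0 := by simp [g, hpart.2.2.1, hbvp.2.2]
  rw [Finset.sum_range_sub (fun i => vn i * g (x i)), hgb, hv.2, Finset.sum_sub_distrib,
    Finset.sum_add_distrib] at hsum
  linarith

/-- Lemma 4.2. Let `k ≥ 0`, `r = k + 1`. Suppose `a2 ∈ C¹([a,b])` is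
positive, `a0` is continuous and nonnegative, and `u ∈ C²([a,b])` solves
`-(a2 u')' + a0 u = f` on `(a,b)` with `u(a) = 0`, `u'(b) = 0`. Then for every partition,
with `ph i` the pieces of `π_h (a2 u')` (degree ≤ `k+1`, matching `a2 u'` at the left node,
and with `(π_h (a2 u'))' = P_h^k ((a2 u')')` elementwise),
`(π_h(a2 u'), d_{w,r} v)_h + (a0 u, v⁰) = (f, v⁰)` for all `v ∈ S_h`. -/
theorem exact_solution_identity (k : ℕ) (a b : ℝ) (hab : a < b) (a2 a0 f u : ℝ → ℝ)
    (ha2 : ContDiffOn ℝ 1 a2 (Set.Icc a b)) (ha2pos : ∀ t ∈ Set.Icc a b, 0 < a2 t)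
    (ha0c : ContinuousOn a0 (Set.Icc a b)) (ha0nn : ∀ t ∈ Set.Icc a b, 0 ≤ a0 t)
    (hu : ContDiffOn ℝ 2 u (Set.Icc a b))
    (hbvp : SolvesBVP a b a2 a0 f u)
    (N : ℕ) (x : ℕ → ℝ) (hpart : IsPartition N a b x)
    (ph : ℕ → Polynomial ℝ)
    (hph : ∀ i < N - 1, (ph i).degree ≤ ((k + 1 : ℕ) : WithBot ℕ) ∧
      (ph i).eval (x i) = a2 (x i) * derivWithin u (Set.Icc a b) (x i) ∧
      ∀ q : Polynomial ℝ, q.degree ≤ (k : WithBot ℕ) →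
        (∫ t in x i..x (i + 1), (ph i).derivative.eval t * q.eval t)
          = ∫ t in x i..x (i + 1),
              derivWithin (fun s => a2 s * derivWithin u (Set.Icc a b) s) (Set.Icc a b) t
                * q.eval t)
    (v0 : ℕ → Polynomial ℝ) (vn : ℕ → ℝ) (Dv : ℕ → Polynomial ℝ)
    (hv : MemSh k N v0 vn) (hDv : IsWeakDerivFam (k + 1) N x v0 vn Dv) :
    ((∑ i ∈ Finset.range (N - 1), ∫ t in x i..x (i + 1), (ph i).eval t * (Dv i).eval t)
      + ∑ i ∈ Finset.range (N - 1), ∫ t in x i..x (i + 1), a0 t * u t * (v0 i).eval t)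
      = ∑ i ∈ Finset.range (N - 1), ∫ t in x i..x (i + 1), f t * (v0 i).eval t :=
  exact_solution_identity_general k a b hab a2 a0 f u ha2 ha0c hu hbvp N x hpart ph hph v0 vn Dv hv
    hDv
end
end
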